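/- Let β, γ ∈ ℝ with β ≠ 0, and consider the complex cubic polynomial P(X) = X³ + 12γX − 4β². Then P has exactly one root with positive real part; this root is real and positive, and the other two roots (counted with multiplicity) have negative real part. -/

import Mathlib

/-!
Since `P(0) = -4β² < 0`, the intermediate value theorem gives a real root `r > 0`. By Vieta the
other two roots satisfy `z + w = -r < 0` and `zw = 4β²/r > 0`. If they are real they have the
same sign, hence are negative; otherwise `Im (zw) = 0` forces `Re z = Re w = -r/2`.
-/

open Polynomial

/-- The cubic polynomial `P(X) = X³ + 12γX − 4β²` with real parameters, over `ℂ`. -/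
noncomputable def Ppoly (β γ : ℝ) : Polynomial ℂ :=
  Polynomial.X ^ 3 + Polynomial.C (12 * (γ : ℂ)) * Polynomial.X
    - Polynomial.C (4 * (β : ℂ) ^ 2)

theorem exists_pos_root_depressed_cubic (p : ℝ) {q : ℝ} (hq : 0 < q) :
    ∃ r : ℝ, 0 < r ∧ r ^ 3 + p * r - q = 0 := by
  set f : ℝ → ℝ := fun x ↦ x ^ 3 + p * x - q
  set M := |p| + q + 1
  have hM1 : 1 ≤ M := by linarith [abs_nonneg p]
  have hM : 0 ≤ M := by linarith
  have hfM : 0 < f M := by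
    have hsq : q + 1 ≤ M ^ 2 + p := by nlinarith [neg_abs_le p]
    calc 0 < 1 * (q + 1) - q := by linarith
      _ ≤ M * (M ^ 2 + p) - q := by gcongr
      _ = f M := by ring
  have hf0 : f 0 < 0 := by simp [f, hq]
  obtain ⟨r, hr, hfr⟩ :=
    intermediate_value_Ioo hM (by fun_prop : ContinuousOn f (Set.Icc 0 M)) ⟨hf0, hfM⟩
  exact ⟨r, hr.1, hfr⟩

theorem exists_roots_depressed_cubic_eq {p q r : ℂ} (hr : r ^ 3 + p * r - q = 0) :
    ∃ z w : ℂ, (X ^ 3 + C p * X - C q).roots = {r, z, w} ∧ r + z + w = 0 ∧ r * z * w = q := by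
  set P : Cubic ℂ := ⟨1, 0, p, -q⟩
  have hP : P.toPoly = X ^ 3 + C p * X - C q := by
    simp only [P, Cubic.toPoly, map_one, one_mul, map_zero, zero_mul, add_zero, map_neg,
      ← sub_eq_add_neg]
  have hmap : Cubic.map (RingHom.id ℂ) P = P := rfl
  have hcard : P.roots.card = 3 := by
    rw [← hmap, ← Cubic.splits_iff_card_roots one_ne_zero, Polynomial.map_id]
    exact IsAlgClosed.splits _
  have hmem : r ∈ P.roots := by
    rw [Cubic.roots, hP, mem_roots (by rw [← hP]; exact Cubic.ne_zero_of_a_ne_zero one_ne_zero)]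
    simpa using hr
  obtain ⟨t, ht⟩ := Multiset.exists_cons_of_mem hmem
  obtain ⟨z, w, rfl⟩ : ∃ z w, t = {z, w} :=
    Multiset.card_eq_two.mp (by simpa [ht] using hcard)
  have h3 : (Cubic.map (RingHom.id ℂ) P).roots = {r, z, w} := by rw [hmap]; exact ht
  refine ⟨z, w, by rw [← hP]; exact ht, ?_, ?_⟩
  · have hb := Cubic.b_eq_three_roots one_ne_zero h3
    simp only [P, RingHom.id_apply] at hb
    linear_combination hb
  · have hd := Cubic.d_eq_three_roots one_ne_zero h3
    simp only [P, RingHom.id_apply] at hd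
    linear_combination hd

theorem re_neg_of_add_eq_of_mul_eq {z w : ℂ} {s p : ℝ} (hs : s < 0) (hp : 0 < p)
    (hadd : z + w = s) (hmul : z * w = p) : z.re < 0 ∧ w.re < 0 := by
  have hre := congrArg Complex.re hadd
  have him := congrArg Complex.im hadd
  have hmre := congrArg Complex.re hmul
  have hmim := congrArg Complex.im hmul
  simp only [Complex.add_re, Complex.add_im, Complex.mul_re, Complex.mul_im, Complex.ofReal_re,
    Complex.ofReal_im] at hre him hmre hmim
  have hwim : w.im = -z.im := by linarith
  rw [hwim] at hmre hmim
  rcases eq_or_ne z.im 0 with h | h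
  · rw [h] at hmre
    constructor <;> nlinarith
  · have hre_eq : z.re = w.re := by
      have : z.im * (w.re - z.re) = 0 := by linear_combination hmim
      linarith [(mul_eq_zero.mp this).resolve_left h]
    constructor <;> linarith

theorem stmt_13 (β γ : ℝ) (hβ : β ≠ 0) :
    ∃ r : ℝ, 0 < r ∧ (r : ℂ) ∈ (Ppoly β γ).roots ∧
      Multiset.count ((r : ℂ)) (Ppoly β γ).roots = 1 ∧
      Multiset.card (Ppoly β γ).roots = 3 ∧
      ∀ z ∈ (Ppoly β γ).roots, z ≠ (r : ℂ) → z.re < 0 := by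
  have hq : 0 < 4 * β ^ 2 := by positivity
  obtain ⟨r, hr, hroot⟩ := exists_pos_root_depressed_cubic (12 * γ) hq
  obtain ⟨z, w, hroots, hsum, hprod⟩ :=
    exists_roots_depressed_cubic_eq (p := 12 * (γ : ℂ)) (q := 4 * (β : ℂ) ^ 2) (r := r)
      (by exact_mod_cast hroot)
  obtain ⟨hz, hw⟩ : z.re < 0 ∧ w.re < 0 :=
    re_neg_of_add_eq_of_mul_eq (neg_neg_of_pos hr) (div_pos hq hr)
      (by push_cast; linear_combination hsum)
      (by push_cast; rw [eq_div_iff (by exact_mod_cast hr.ne')]; linear_combination hprod)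
  have hrz : (r : ℂ) ≠ z := fun h ↦ by simp [← h] at hz; linarith
  have hrw : (r : ℂ) ≠ w := fun h ↦ by simp [← h] at hw; linarith
  rw [Ppoly, hroots]
  refine ⟨r, hr, by simp, ?_, by simp, ?_⟩
  · simp [hrz, hrw]
  · simp only [Multiset.insert_eq_cons, Multiset.mem_cons, Multiset.mem_singleton]
    rintro u (rfl | rfl | rfl) hu
    exacts [absurd rfl hu, hz, hw]
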